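/- arXiv:2501.06804 — 2 statements merged into one kernel-verified Lean document; each statement's English description precedes it below -/
import Mathlib

section
/- For any μ > 0 and s ∈ ℝ, the function φ₁(s,μ) = μ·ln(2 + e^{-s/μ} + e^{s/μ}) satisfies |φ₁(s,μ) - |s|| ≤ μ·ln 4. -/
theorem phi1_abs_error_bound (μ s : ℝ) (hμ : 0 < μ) :
    abs (μ * Real.log (2 + Real.exp (-s / μ) + Real.exp (s / μ)) - |s|) ≤ μ * Real.log 4 := by
  set t := s / μ with ht
  have hst : |s| = μ * |t| := by
    rw [ht, abs_div, abs_of_pos hμ]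
    field_simp
  have hA : (0:ℝ) < 2 + Real.exp (-t) + Real.exp t := by positivity
  have h1 : Real.exp |t| ≤ 2 + Real.exp (-t) + Real.exp t := by
    rcases abs_cases t with ⟨h, _⟩ | ⟨h, _⟩ <;> rw [h] <;> nlinarith [Real.exp_pos t, Real.exp_pos (-t)]
  have h2 : 2 + Real.exp (-t) + Real.exp t ≤ 4 * Real.exp |t| := by
    have ha : Real.exp (-t) ≤ Real.exp |t| := Real.exp_le_exp.2 (neg_le_abs t)
    have hb : Real.exp t ≤ Real.exp |t| := Real.exp_le_exp.2 (le_abs_self t)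
    have hc : (1:ℝ) ≤ Real.exp |t| := Real.one_le_exp (abs_nonneg t)
    linarith
  have hlow : |t| ≤ Real.log (2 + Real.exp (-t) + Real.exp t) := by
    calc |t| = Real.log (Real.exp |t|) := (Real.log_exp _).symm
    _ ≤ _ := Real.log_le_log (Real.exp_pos _) h1
  have hhigh : Real.log (2 + Real.exp (-t) + Real.exp t) ≤ Real.log 4 + |t| := by
    calc Real.log (2 + Real.exp (-t) + Real.exp t) ≤ Real.log (4 * Real.exp |t|) :=
          Real.log_le_log hA h2
    _ = Real.log 4 + |t| := by rw [Real.log_mul (by norm_num) (Real.exp_ne_zero _), Real.log_exp]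
  have hneg : -s / μ = -t := by rw [ht]; ring
  rw [hneg, hst, ← mul_sub, abs_mul, abs_of_pos hμ]
  have : abs (Real.log (2 + Real.exp (-t) + Real.exp t) - |t|) ≤ Real.log 4 := by
    rw [abs_sub_le_iff]
    constructor
    · linarith
    · have : (0:ℝ) ≤ Real.log 4 := Real.log_nonneg (by norm_num)
      linarith
  exact mul_le_mul_of_nonneg_left this hμ.le
end

section
/- Let f̃ be a smoothing function of f satisfying |∇_μ f̃(x,μ)| ≤ κ μ^{-q} for all x in a bounded set 𝒳 and μ ∈ (0, μ̄], where q ∈ [0,1), together with lim_{z→x, μ↓0} f̃(z,μ) = f(x). Then |f̃(x,μ) - f(x)| ≤ (κ/(1-q)) μ^{1-q} for all x ∈ 𝒳 and μ ∈ (0, μ̄]. In particular |f̃(x,μ) - f(x)| → 0 uniformly as μ → 0. -/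
/-!
Along each slice `μ ↦ f̃(x, μ)` the derivative is dominated by the derivative of
`G μ = κ/(1-q) μ^{1-q}`, so `G + f̃(x, ·)` and `G - f̃(x, ·)` are monotone on `(0, μ̄]`.
Letting the smaller argument tend to `0⁺`, where `f̃(x, ·) → f x` and `G → 0` (as `1 - q > 0`),
gives `f x ≤ G μ + f̃(x, μ)` and `-f x ≤ G μ - f̃(x, μ)`.
-/

open Real Filter Set Topology

theorem MonotoneOn.le_of_tendsto_nhdsGT {α β : Type*} [LinearOrder α] [DenselyOrdered α]
    [TopologicalSpace α] [OrderTopology α] [Preorder β] [TopologicalSpace β] [ClosedIicTopology β]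
    {h : α → β} {a b : α} {c : β} (hh : MonotoneOn h (Ioc a b))
    (hlim : Tendsto h (𝓝[>] a) (𝓝 c)) {t : α} (ht : t ∈ Ioc a b) : c ≤ h t := by
  have : (𝓝[>] a).NeBot := nhdsGT_neBot_of_exists_gt ⟨t, ht.1⟩
  refine le_of_tendsto hlim ?_
  filter_upwards [Ioo_mem_nhdsGT ht.1] with s hs
  exact hh ⟨hs.1, hs.2.le.trans ht.2⟩ ht hs.2.le

theorem monotoneOn_Ioc_of_hasDerivWithinAt_nonneg {F F' : ℝ → ℝ} {a b : ℝ}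
    (hF : ∀ t ∈ Ioc a b, HasDerivWithinAt F (F' t) (Ioc a b) t)
    (hF' : ∀ t ∈ Ioc a b, 0 ≤ F' t) : MonotoneOn F (Ioc a b) := by
  refine monotoneOn_of_hasDerivWithinAt_nonneg (convex_Ioc a b)
    (fun t ht ↦ (hF t ht).continuousWithinAt)
    (fun t ht ↦ (hF t (interior_subset ht)).mono interior_subset)
    (fun t ht ↦ hF' t (interior_subset ht))

theorem abs_sub_le_of_abs_deriv_le {F F' G G' : ℝ → ℝ} {a b L : ℝ}
    (hF : ∀ t ∈ Ioc a b, HasDerivWithinAt F (F' t) (Ioc a b) t)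
    (hG : ∀ t ∈ Ioc a b, HasDerivWithinAt G (G' t) (Ioc a b) t)
    (hbound : ∀ t ∈ Ioc a b, |F' t| ≤ G' t)
    (hFlim : Tendsto F (𝓝[>] a) (𝓝 L)) (hGlim : Tendsto G (𝓝[>] a) (𝓝 0))
    {t : ℝ} (ht : t ∈ Ioc a b) : |F t - L| ≤ G t := by
  have hadd : L ≤ G t + F t := by
    have hlim : Tendsto (fun s ↦ G s + F s) (𝓝[>] a) (𝓝 L) := by
      simpa using hGlim.add hFlim
    refine (monotoneOn_Ioc_of_hasDerivWithinAt_nonneg (fun s hs ↦ (hG s hs).add (hF s hs))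
      fun s hs ↦ ?_).le_of_tendsto_nhdsGT hlim ht
    linarith [neg_abs_le (F' s), hbound s hs]
  have hsub : -L ≤ G t - F t := by
    have hlim : Tendsto (fun s ↦ G s - F s) (𝓝[>] a) (𝓝 (-L)) := by
      simpa using hGlim.sub hFlim
    refine (monotoneOn_Ioc_of_hasDerivWithinAt_nonneg (fun s hs ↦ (hG s hs).sub (hF s hs))
      fun s hs ↦ ?_).le_of_tendsto_nhdsGT hlim ht
    linarith [le_abs_self (F' s), hbound s hs]
  rw [abs_sub_le_iff]
  constructor <;> linarith

theorem hasDerivAt_mul_rpow_one_sub {κ q t : ℝ} (hq : q ≠ 1) (ht : 0 < t) :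
    HasDerivAt (fun s ↦ κ / (1 - q) * s ^ (1 - q)) (κ * t ^ (-q)) t := by
  refine ((hasDerivAt_rpow_const (Or.inl ht.ne')).const_mul (κ / (1 - q))).congr_deriv ?_
  rw [sub_sub_cancel_left]
  field_simp [sub_ne_zero.mpr hq.symm]

theorem tendsto_mul_rpow_nhdsGT_zero {c p : ℝ} (hp : 0 < p) :
    Tendsto (fun s : ℝ ↦ c * s ^ p) (𝓝[>] 0) (𝓝 0) := by
  simpa [zero_rpow hp.ne'] using
    ((continuousAt_rpow_const 0 p (Or.inr hp.le)).tendsto.mono_left nhdsWithin_le_nhds).const_mul c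

theorem smoothing_error_bound_general (d : ℕ) (X : Set (EuclideanSpace ℝ (Fin d)))
    (f : EuclideanSpace ℝ (Fin d) → ℝ)
    (ft : EuclideanSpace ℝ (Fin d) → ℝ → ℝ)
    (μbar κ q : ℝ) (hq1 : q < 1)
    (g : EuclideanSpace ℝ (Fin d) → ℝ → ℝ)
    (hderiv : ∀ x ∈ X, ∀ μ ∈ Set.Ioc 0 μbar,
      HasDerivWithinAt (ft x) (g x μ) (Set.Ioc 0 μbar) μ)
    (hgbound : ∀ x ∈ X, ∀ μ ∈ Set.Ioc 0 μbar, |g x μ| ≤ κ * μ ^ (-q))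
    (hconv : ∀ x : EuclideanSpace ℝ (Fin d),
      Tendsto (fun p : EuclideanSpace ℝ (Fin d) × ℝ => ft p.1 p.2)
        ((nhds x) ×ˢ (nhdsWithin 0 (Set.Ioi 0))) (nhds (f x))) :
    ∀ x ∈ X, ∀ μ ∈ Set.Ioc 0 μbar, |ft x μ - f x| ≤ κ / (1 - q) * μ ^ (1 - q) := by
  intro x hx μ hμ
  have hslice : Tendsto (ft x) (𝓝[>] 0) (𝓝 (f x)) :=
    (hconv x).comp (tendsto_const_nhds.prodMk tendsto_id)
  exact abs_sub_le_of_abs_deriv_le (hderiv x hx)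
    (fun t ht ↦ (hasDerivAt_mul_rpow_one_sub hq1.ne ht.1).hasDerivWithinAt)
    (hgbound x hx) hslice (tendsto_mul_rpow_nhdsGT_zero (sub_pos.mpr hq1)) hμ

theorem smoothing_error_bound (d : ℕ) (X : Set (EuclideanSpace ℝ (Fin d)))
    (hX : Bornology.IsBounded X)
    (f : EuclideanSpace ℝ (Fin d) → ℝ) (hf : Continuous f)
    (ft : EuclideanSpace ℝ (Fin d) → ℝ → ℝ)
    (μbar κ q : ℝ) (hμbar : 0 < μbar) (hκ : 0 < κ) (hq0 : 0 ≤ q) (hq1 : q < 1)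
    (g : EuclideanSpace ℝ (Fin d) → ℝ → ℝ)
    (hderiv : ∀ x ∈ X, ∀ μ ∈ Set.Ioc 0 μbar,
      HasDerivWithinAt (ft x) (g x μ) (Set.Ioc 0 μbar) μ)
    (hgbound : ∀ x ∈ X, ∀ μ ∈ Set.Ioc 0 μbar, |g x μ| ≤ κ * μ ^ (-q))
    (hconv : ∀ x : EuclideanSpace ℝ (Fin d),
      Tendsto (fun p : EuclideanSpace ℝ (Fin d) × ℝ => ft p.1 p.2)
        ((nhds x) ×ˢ (nhdsWithin 0 (Set.Ioi 0))) (nhds (f x))) :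
    ∀ x ∈ X, ∀ μ ∈ Set.Ioc 0 μbar, |ft x μ - f x| ≤ κ / (1 - q) * μ ^ (1 - q) :=
  smoothing_error_bound_general d X f ft μbar κ q hq1 g hderiv hgbound hconv
end
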